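/- For every z* ∈ P(k0) and every z0 ∈ T(z*): ∑_{z ∈ T(z*), z ≥ z0} cn_{z*}(z)·r(z) ≥ ∑_{z ∈ T(z*), z ≥ z0} S(H_z)·r(z)/g(z). -/

import Mathlib

open scoped Classical
open Finset MeasureTheory

namespace BSHM

noncomputable section

/-- The set of candidate parents of machine type `i`: types `j ∈ M` with `j > i`
and a strictly smaller normalized cost rate per capacity unit. -/
def pset (m : ℕ) (g r : ℕ → ℝ) (i : ℕ) : Set ℕ :=
  {j | j ≤ m ∧ i < j ∧ r j / g j < r i / g i}

/-- The parent `p i` of machine type `i` (equal to `0` when the parent is undefined,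
since any actual parent has index `≥ 2`). -/
def p (m : ℕ) (g r : ℕ → ℝ) (i : ℕ) : ℕ := sInf (pset m g r i)

/-- `pdef i` asserts that the parent of `i` is defined. -/
def pdef (m : ℕ) (g r : ℕ → ℝ) (i : ℕ) : Prop := (pset m g r i).Nonempty

/-- One step of the parent relation: `b` is the (defined) parent of `a`. -/
def pstep (m : ℕ) (g r : ℕ → ℝ) (a b : ℕ) : Prop :=
  pdef m g r a ∧ b = p m g r a

/-- `P i`: the set consisting of `i` together with all of its iterated parents. -/
def P (m : ℕ) (g r : ℕ → ℝ) (i : ℕ) : Set ℕ :=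
  {z | Relation.ReflTransGen (pstep m g r) i z}

/-- `A i`: the set of nodes in the tree rooted at `i`,
i.e. all `z ∈ M` having `i` as an ancestor (or equal to `i`). -/
def A (m : ℕ) (g r : ℕ → ℝ) (i : ℕ) : Set ℕ :=
  {z | 1 ≤ z ∧ z ≤ m ∧ i ∈ P m g r z}

/-- `v i`: the lowest-indexed node in the tree rooted at `i`. -/
def v (m : ℕ) (g r : ℕ → ℝ) (i : ℕ) : ℕ := sInf (A m g r i)

/-- `y i`: the younger siblings of `i` (same parent status, smaller index). -/
def y (m : ℕ) (g r : ℕ → ℝ) (i : ℕ) : Set ℕ :=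
  {z | 1 ≤ z ∧ z ≤ m ∧ z < i ∧ p m g r z = p m g r i}

/-- `esib i`: the elder siblings of `i`. -/
def esib (m : ℕ) (g r : ℕ → ℝ) (i : ℕ) : Set ℕ :=
  {z | 1 ≤ z ∧ z ≤ m ∧ i < z ∧ p m g r z = p m g r i}

/-- `T k := {k} ∪ ⋃_{z ∈ P(k)} y(z)`. -/
def T (m : ℕ) (g r : ℕ → ℝ) (k : ℕ) : Set ℕ :=
  {k} ∪ ⋃ z ∈ P m g r k, y m g r z

/-- `T k` as a `Finset` (all relevant nodes lie in `{k} ∪ [1, m]`). -/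
def TIcc (m : ℕ) (g r : ℕ → ℝ) (k : ℕ) : Finset ℕ :=
  (insert k (Finset.Icc 1 m)).filter (fun z => z ∈ T m g r k)

/-! ### Jobs and one-shot scheduling -/

variable {ι : Type*}

/-- The exact machine type of a job `J`: the least `z ∈ M` with `s J ≤ g z`. -/
def mty (m : ℕ) (g : ℕ → ℝ) (s : ι → ℝ) (J : ι) : ℕ :=
  sInf {z | 1 ≤ z ∧ z ≤ m ∧ s J ≤ g z}

/-- Total size of a finite set of jobs. -/
def Ssum (s : ι → ℝ) (W : Finset ι) : ℝ := ∑ J ∈ W, s J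

/-- `k0f X`: the highest-indexed exact machine type among the jobs of `X`. -/
def k0f (m : ℕ) (g : ℕ → ℝ) (s : ι → ℝ) (X : Finset ι) : ℕ :=
  X.sup (fun J => mty m g s J)

/-- `H z X`: the jobs of `X` whose exact machine type lies in the tree rooted at `z`. -/
def H (m : ℕ) (g r : ℕ → ℝ) (s : ι → ℝ) (z : ℕ) (X : Finset ι) : Finset ι :=
  X.filter (fun J => mty m g s J ∈ A m g r z)

/-- `SH X z := S(H_z(X))`. -/
def SH (m : ℕ) (g r : ℕ → ℝ) (s : ι → ℝ) (X : Finset ι) (z : ℕ) : ℝ :=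
  Ssum s (H m g r s z X)

/-- Feasibility of a machine configuration `w : M → ℕ` for the job set `X`. -/
def Feasible (m : ℕ) (g : ℕ → ℝ) (s : ι → ℝ) (X : Finset ι) (w : ℕ → ℕ) : Prop :=
  ∀ i, 1 ≤ i → i ≤ m →
    Ssum s (X.filter (fun J => i ≤ mty m g s J)) ≤ ∑ z ∈ Finset.Icc i m, (w z : ℝ) * g z

/-- The cost of a machine configuration. -/
def cost (m : ℕ) (r : ℕ → ℝ) (w : ℕ → ℕ) : ℝ :=
  ∑ z ∈ Finset.Icc 1 m, (w z : ℝ) * r z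

/-- The optimal one-shot scheduling cost for a job set `X`. -/
def OPT1 (m : ℕ) (g r : ℕ → ℝ) (s : ι → ℝ) (X : Finset ι) : ℝ :=
  sInf {c : ℝ | ∃ w : ℕ → ℕ, Feasible m g s X w ∧ c = cost m r w}

/-- The fractional machine configuration `cn_{z*}` for the job set `X`, with
highest-indexed machine type `zs`.  A node `i ∈ T(zs) \ {zs}` is the boundary
type `i*` exactly when `∑_{z ∈ T(zs), z > i} S(H_z) ≤ cn(zs)·g(zs) <
∑_{z ∈ T(zs), z ≥ i} S(H_z)`; nodes above the boundary get `0`,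
nodes below it get `S(H_i)/g_i`. -/
def cn (m : ℕ) (g r : ℕ → ℝ) (s : ι → ℝ) (X : Finset ι) (zs i : ℕ) : ℝ :=
  let B : ℝ := (⌈SH m g r s X zs / g zs⌉₊ : ℝ) * g zs
  let Sge : ℝ := ∑ z ∈ (TIcc m g r zs).filter (fun z => i ≤ z), SH m g r s X z
  let Sgt : ℝ := ∑ z ∈ (TIcc m g r zs).filter (fun z => i < z), SH m g r s X z
  if i = zs then (⌈SH m g r s X zs / g zs⌉₊ : ℝ)
  else if i ∈ T m g r zs then
    (if Sgt ≤ B ∧ B < Sge then (Sge - B) / g i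
     else if B < Sgt then SH m g r s X i / g i
     else 0)
  else 0

/-- `cn_{zs}` is decent: for every strict ancestor `zt` of `zs`, the total cost of
the machines of types in `T(zs) ∩ A(zt)` is at most the cost of one type-`zt` machine. -/
def decent (m : ℕ) (g r : ℕ → ℝ) (s : ι → ℝ) (X : Finset ι) (zs : ℕ) : Prop :=
  ∀ zt ∈ P m g r zs, zt ≠ zs →
    (∑ z ∈ (TIcc m g r zs).filter (fun z => z ∈ A m g r zt), cn m g r s X zs z * r z) ≤ r zt

/-- `z⋄(X)`: the least `z* ∈ P(k0(X))` such that `cn_{z*}` is decent. -/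
def zdia (m : ℕ) (g r : ℕ → ℝ) (s : ι → ℝ) (X : Finset ι) : ℕ :=
  sInf {zs | zs ∈ P m g r (k0f m g s X) ∧ decent m g r s X zs}

/-- The child of `zd` whose subtree contains node `k`. -/
def chil (m : ℕ) (g r : ℕ → ℝ) (zd k : ℕ) : ℕ :=
  sInf {i | p m g r i = zd ∧ k ∈ A m g r i}

/-- The node `i ∈ T(zd)` whose subtree contains node `k`. -/
def idxT (m : ℕ) (g r : ℕ → ℝ) (zd k : ℕ) : ℕ :=
  sInf {i | i ∈ T m g r zd ∧ k ∈ A m g r i}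

/-- The children `f(zd)` of node `zd`, as a `Finset`. -/
def fchFin (m : ℕ) (g r : ℕ → ℝ) (zd : ℕ) : Finset ℕ :=
  (Finset.Icc 1 m).filter (fun z => p m g r z = zd)

/-- The cost `r̃(X)(J)` charged to the job `J` of the job set `X`. -/
def charge (m : ℕ) (g r : ℕ → ℝ) (s : ι → ℝ) (X : Finset ι) (J : ι) : ℝ :=
  let zd := zdia m g r s X
  let ρ : ℕ → ℝ := fun i => r i / g i
  let Hh := X.filter (fun J' => mty m g s J' = zd)
  let c : ℝ := Ssum s Hh * ρ zd + ∑ i ∈ fchFin m g r zd, SH m g r s X i * ρ i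
  if mty m g s J ∈ A m g r zd then
    if g zd ≤ SH m g r s X zd then s J * ρ zd
    else if r zd < c then
      if mty m g s J = zd then s J * ρ zd
      else
        s J * (ρ (chil m g r zd (mty m g s J)) -
          (ρ (chil m g r zd (mty m g s J)) - ρ zd) *
            ((c - r zd) /
              (∑ i ∈ fchFin m g r zd, ∑ J' ∈ H m g r s i X, s J' * (ρ i - ρ zd))))
    else
      if mty m g s J = zd then s J * ρ zd * (1 + (r zd - c) / (Ssum s Hh * ρ zd))
      else s J * ρ (chil m g r zd (mty m g s J))
  else s J * ρ (idxT m g r zd (mty m g s J))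

end

end BSHM

/-!
Write `cn(z)·r(z) = cn(z)·g(z)·ρ(z)` with `ρ = r/g`. Along the tree, `ρ` is nondecreasing on
`T(z*)`: a younger sibling of an ancestor of `z*` has no cheaper type below the common parent, and
the ancestors of `z*` beat every type between them. Moreover `cn` covers every suffix load: the
capacity `cn(z)·g(z)` summed over `z ∈ T(z*)`, `z ≥ t`, is at least `∑_{z ≥ t} S(H_z)`, because
`cn` hands each type either its own load or the part of the suffix load exceeding the
`⌈S(H_{z*})/g(z*)⌉` machines of type `z*`. Abel summation of these nonnegative suffix surpluses
against the nonnegative nondecreasing `ρ` gives the inequality.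
-/

namespace Finset

theorem sum_mul_nonneg_of_suffix_sum_nonneg {α R : Type*} [LinearOrder α] [CommRing R]
    [PartialOrder R] [IsOrderedRing R] {F : Finset α} {d ρ : α → R}
    (hρ : MonotoneOn ρ F) (hρ0 : ∀ z ∈ F, 0 ≤ ρ z)
    (hd : ∀ t ∈ F, 0 ≤ ∑ z ∈ F with t ≤ z, d z) :
    0 ≤ ∑ z ∈ F, d z * ρ z := by
  induction F using Finset.induction_on_min generalizing ρ with
  | empty => simp
  | insert a s has ih =>
    have ha : a ∉ s := fun h => lt_irrefl a (has a h)
    have hρa : ∀ z ∈ s, ρ a ≤ ρ z := fun z hz =>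
      hρ (mem_insert_self a s) (mem_insert_of_mem hz) (has z hz).le
    -- Abel summation: peel off `ρ a` times the total sum, which is the suffix sum at `a`.
    have hsplit : ∑ z ∈ insert a s, d z * ρ z
        = ρ a * ∑ z ∈ insert a s with a ≤ z, d z + ∑ z ∈ s, d z * (ρ z - ρ a) := by
      rw [filter_true_of_mem fun z hz => (mem_insert.mp hz).elim ge_of_eq fun h => (has z h).le,
        sum_insert ha, sum_insert ha, mul_add, mul_sum]
      simp only [mul_sub, sum_sub_distrib, mul_comm (ρ a)]
      abel
    rw [hsplit]
    refine add_nonneg (mul_nonneg (hρ0 a (mem_insert_self a s)) (hd a (mem_insert_self a s))) ?_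
    refine ih (fun x hx y hy hxy => sub_le_sub_right (hρ (mem_insert_of_mem hx)
      (mem_insert_of_mem hy) hxy) _) (fun z hz => sub_nonneg.mpr (hρa z hz)) fun t ht => ?_
    have h := hd t (mem_insert_of_mem ht)
    rwa [filter_insert, if_neg (not_le.mpr (has t ht))] at h

theorem sum_filter_le_eq_add {α M : Type*} [LinearOrder α] [AddCommMonoid M] {F : Finset α}
    {t : α} (ht : t ∈ F) (f : α → M) :
    ∑ z ∈ F with t ≤ z, f z = f t + ∑ z ∈ F with t < z, f z := by
  have : F.filter (t ≤ ·) = insert t (F.filter (t < ·)) := by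
    ext z
    simp only [mem_filter, mem_insert]
    constructor
    · rintro ⟨hz, htz⟩
      rcases htz.eq_or_lt with rfl | h
      exacts [Or.inl rfl, Or.inr ⟨hz, h⟩]
    · rintro (rfl | ⟨hz, h⟩)
      exacts [⟨ht, le_rfl⟩, ⟨hz, h.le⟩]
  rw [this, sum_insert (by simp)]

theorem filter_le_eq_filter_lt_of_notMem {α : Type*} [LinearOrder α] {F : Finset α} {t : α}
    (ht : t ∉ F) : F.filter (t ≤ ·) = F.filter (t < ·) :=
  filter_congr fun z hz => ⟨fun h => h.lt_of_ne (by rintro rfl; exact ht hz), le_of_lt⟩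

/-- `hfill`: every `t` other than `top` receives its own load `a t`, or at least what the loads
from `t` upward still lack after `c top`. -/
theorem sum_filter_le_le_of_fill {F : Finset ℕ} {top : ℕ} {a c : ℕ → ℝ}
    (htop : top ∈ F) (hF : ∀ z ∈ F, z ≤ top) (hc : ∀ z ∈ F, 0 ≤ c z) (hatop : a top ≤ c top)
    (hfill : ∀ t ∈ F, t ≠ top → min (∑ z ∈ F with t ≤ z, a z - c top) (a t) ≤ c t) :
    ∀ t ≤ top, ∑ z ∈ F with t ≤ z, a z ≤ ∑ z ∈ F with t ≤ z, c z := by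
  intro t ht
  induction ht using Nat.decreasingInduction with
  | self =>
    have : F.filter (top ≤ ·) = {top} :=
      eq_singleton_iff_unique_mem.mpr ⟨mem_filter.mpr ⟨htop, le_rfl⟩,
        fun z hz => le_antisymm (hF z (mem_filter.mp hz).1) (mem_filter.mp hz).2⟩
    simpa [this] using hatop
  | of_succ t hlt ih =>
    simp only [Nat.add_one_le_iff] at ih
    by_cases htF : t ∈ F
    · have hctop : c top ≤ ∑ z ∈ F with t < z, c z :=
        single_le_sum (fun z hz => hc z (mem_filter.mp hz).1) (mem_filter.mpr ⟨htop, hlt⟩)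
      have hmin := hfill t htF (Nat.ne_of_lt hlt)
      simp only [sum_filter_le_eq_add htF] at hmin ⊢
      rcases min_le_iff.mp hmin with h | h <;> linarith
    · rwa [filter_le_eq_filter_lt_of_notMem htF]

end Finset

namespace BSHM

section Tree

variable {m : ℕ} {g r : ℕ → ℝ}

lemma p_mem_pset {a : ℕ} (h : pdef m g r a) : p m g r a ∈ pset m g r a := Nat.sInf_mem h

lemma p_eq_zero_of_not_pdef {a : ℕ} (h : ¬pdef m g r a) : p m g r a = 0 := by
  rw [p, Set.not_nonempty_iff_eq_empty.mp h, Nat.sInf_empty]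

lemma mem_pset_of_pstep {a b : ℕ} (h : pstep m g r a b) : b ∈ pset m g r a :=
  h.2 ▸ p_mem_pset h.1

lemma le_of_mem_P {a b : ℕ} (h : b ∈ P m g r a) : a ≤ b := by
  induction h with
  | refl => rfl
  | tail _ hstep ih => exact ih.trans (mem_pset_of_pstep hstep).2.1.le

lemma le_m_of_mem_P {a b : ℕ} (ha : a ≤ m) (h : b ∈ P m g r a) : b ≤ m := by
  induction h with
  | refl => exact ha
  | tail _ hstep => exact (mem_pset_of_pstep hstep).1

lemma ratio_lt_of_mem_P {a w x : ℕ} (h : w ∈ P m g r a) (hax : a ≤ x) (hxw : x < w) :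
    r w / g w < r x / g x := by
  induction h with
  | refl => omega
  | @tail b c _ hbc ih =>
    obtain ⟨hcm, -, hratio⟩ := mem_pset_of_pstep hbc
    rcases lt_trichotomy x b with hxb | rfl | hbx
    · exact hratio.trans (ih hxb)
    · exact hratio
    · have hx : x ∉ pset m g r b := Nat.notMem_of_lt_sInf (hbc.2 ▸ hxw :)
      exact hratio.trans_le (not_lt.mp fun h => hx ⟨hxw.le.trans hcm, hbx, h⟩)

lemma notMem_pset_of_mem_y {w z x : ℕ} (hz : z ∈ y m g r w) (hxw : x ≤ w) :
    x ∉ pset m g r z := by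
  intro hx
  have hzp : z < p m g r z := (p_mem_pset ⟨x, hx⟩).2.1
  have hpx : p m g r z ≤ x := Nat.sInf_le hx
  rw [hz.2.2.2] at hzp hpx
  by_cases hw : pdef m g r w
  · have := (p_mem_pset hw).2.1
    omega
  · rw [p_eq_zero_of_not_pdef hw] at hzp
    omega

lemma ratio_le_of_mem_y {w z x : ℕ} (hz : z ∈ y m g r w) (hzx : z < x) (hxw : x ≤ w)
    (hxm : x ≤ m) : r z / g z ≤ r x / g x :=
  not_lt.mp fun h => notMem_pset_of_mem_y hz hxw ⟨hxm, hzx, h⟩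

lemma mem_T_iff {k z : ℕ} : z ∈ T m g r k ↔ z = k ∨ ∃ w ∈ P m g r k, z ∈ y m g r w := by
  simp [T]

lemma le_of_mem_T {k z : ℕ} (hkm : k ≤ m) (hz : z ∈ T m g r k) : z ≤ k := by
  obtain rfl | ⟨w, hw, hzw⟩ := mem_T_iff.mp hz
  · rfl
  by_contra! hkz
  have hlt := ratio_lt_of_mem_P hw hkz.le hzw.2.2.1
  have hle := ratio_le_of_mem_y hzw hzw.2.2.1 le_rfl (le_m_of_mem_P hkm hw)
  linarith

lemma ratio_monotoneOn_T {k : ℕ} (hkm : k ≤ m) :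
    MonotoneOn (fun z => r z / g z) (T m g r k) := by
  intro z₁ hz₁ z₂ hz₂ h
  obtain rfl | hlt := h.eq_or_lt
  · rfl
  have hz₂k := le_of_mem_T hkm hz₂
  obtain rfl | ⟨w, hw, hz₁w⟩ := mem_T_iff.mp hz₁
  · omega
  exact ratio_le_of_mem_y hz₁w hlt (hz₂k.trans (le_of_mem_P hw)) (hz₂k.trans hkm)

lemma self_mem_TIcc (k : ℕ) : k ∈ TIcc m g r k :=
  mem_filter.mpr ⟨mem_insert_self _ _, Or.inl rfl⟩

lemma mem_T_of_mem_TIcc {k z : ℕ} (hz : z ∈ TIcc m g r k) : z ∈ T m g r k :=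
  (mem_filter.mp hz).2

lemma mem_Icc_of_mem_TIcc {k z : ℕ} (hk : k ∈ Icc 1 m) (hz : z ∈ TIcc m g r k) :
    z ∈ Icc 1 m := by
  rcases mem_insert.mp (mem_filter.mp hz).1 with rfl | h
  exacts [hk, h]

end Tree

section Configuration

variable {ι : Type*} {m : ℕ} {g r : ℕ → ℝ} {s : ι → ℝ} {X : Finset ι} {k : ℕ}

lemma mty_mem_Icc {J : ι} (hm : 1 ≤ m) (hJ : s J ≤ g m) : mty m g s J ∈ Icc 1 m :=
  have h := Nat.sInf_mem (s := {z | 1 ≤ z ∧ z ≤ m ∧ s J ≤ g z}) ⟨m, hm, le_rfl, hJ⟩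
  mem_Icc.mpr ⟨h.1, h.2.1⟩

lemma k0f_mem_Icc (hm : 1 ≤ m) (hX : X.Nonempty) (hs : ∀ J ∈ X, s J ≤ g m) :
    k0f m g s X ∈ Icc 1 m := by
  obtain ⟨J, hJ⟩ := hX
  refine mem_Icc.mpr ⟨(mem_Icc.mp (mty_mem_Icc hm (hs J hJ))).1.trans ?_, ?_⟩
  · exact le_sup (f := fun J => mty m g s J) hJ
  · exact Finset.sup_le fun J hJ => (mem_Icc.mp (mty_mem_Icc hm (hs J hJ))).2

lemma SH_nonneg (hs : ∀ J ∈ X, 0 ≤ s J) (z : ℕ) : 0 ≤ SH m g r s X z :=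
  sum_nonneg fun J hJ => hs J (mem_filter.mp hJ).1

lemma cn_self : cn m g r s X k k = ⌈SH m g r s X k / g k⌉₊ := by
  simp [cn]

lemma cn_nonneg (hs : ∀ J ∈ X, 0 ≤ s J) {i : ℕ} (hgi : 0 ≤ g i) : 0 ≤ cn m g r s X k i := by
  unfold cn
  dsimp only
  split_ifs with _ _ h
  · positivity
  · exact div_nonneg (sub_nonneg.mpr h.2.le) hgi
  · exact div_nonneg (SH_nonneg hs i) hgi
  all_goals exact le_rfl

lemma min_le_cn_mul {i : ℕ} (hi : i ∈ T m g r k) (hik : i ≠ k) (hgi : 0 < g i) :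
    min (∑ z ∈ TIcc m g r k with i ≤ z, SH m g r s X z - cn m g r s X k k * g k)
      (SH m g r s X i) ≤ cn m g r s X k i * g i := by
  rw [cn_self]
  unfold cn
  dsimp only
  rw [if_neg hik, if_pos hi]
  split_ifs with hbdry hbelow
  · rw [div_mul_cancel₀ _ hgi.ne']
    exact min_le_left _ _
  · rw [div_mul_cancel₀ _ hgi.ne']
    exact min_le_right _ _
  · push Not at hbdry hbelow
    rw [zero_mul]
    exact (min_le_left _ _).trans (sub_nonpos.mpr (hbdry hbelow))

theorem sum_SH_le_sum_cn_mul (hs : ∀ J ∈ X, 0 ≤ s J) (hkm : k ≤ m)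
    (hg : ∀ z ∈ TIcc m g r k, 0 < g z) :
    ∀ t ≤ k, ∑ z ∈ TIcc m g r k with t ≤ z, SH m g r s X z
      ≤ ∑ z ∈ TIcc m g r k with t ≤ z, cn m g r s X k z * g z := by
  have hk := self_mem_TIcc (m := m) (g := g) (r := r) k
  refine sum_filter_le_le_of_fill hk (fun z hz => le_of_mem_T hkm (mem_T_of_mem_TIcc hz))
    (fun z hz => mul_nonneg (cn_nonneg hs (hg z hz).le) (hg z hz).le) ?_
    (fun t ht htk => min_le_cn_mul (mem_T_of_mem_TIcc ht) htk (hg t ht))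
  rw [cn_self, ← div_le_iff₀ (hg k hk)]
  exact Nat.le_ceil _

end Configuration

lemma pos_of_increasing {m : ℕ} {f : ℕ → ℝ} (h1 : 0 < f 1)
    (hf : ∀ i j, 1 ≤ i → i < j → j ≤ m → f i < f j) {z : ℕ} (hz : z ∈ Icc 1 m) : 0 < f z := by
  obtain ⟨hz1, hzm⟩ := mem_Icc.mp hz
  rcases hz1.eq_or_lt with rfl | h
  exacts [h1, h1.trans (hf 1 z le_rfl h hzm)]

/-- For every `z* ∈ P(k0)` and every `z0 ∈ T(z*)`:
`∑_{z ∈ T(z*), z ≥ z0} cn_{z*}(z)·r z ≥ ∑_{z ∈ T(z*), z ≥ z0} S(H_z)·r z/g z`. -/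
theorem statement_9 {ι : Type*} (m : ℕ) (g r : ℕ → ℝ) (s : ι → ℝ) (𝒥 : Finset ι)
    (hm : 1 ≤ m)
    (hg1 : 0 < g 1) (hr1 : 0 < r 1)
    (hg : ∀ i j, 1 ≤ i → i < j → j ≤ m → g i < g j)
    (hr : ∀ i j, 1 ≤ i → i < j → j ≤ m → r i < r j)
    (hJ : 𝒥.Nonempty)
    (hs : ∀ J ∈ 𝒥, 0 < s J ∧ s J ≤ g m) :
    ∀ zs ∈ P m g r (k0f m g s 𝒥), ∀ z0 ∈ T m g r zs,
      (∑ z ∈ (TIcc m g r zs).filter (fun z => z0 ≤ z),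
          SH m g r s 𝒥 z * (r z / g z))
        ≤ ∑ z ∈ (TIcc m g r zs).filter (fun z => z0 ≤ z),
            cn m g r s 𝒥 zs z * r z := by
  intro zs hzs z0 _
  obtain ⟨hk1, hkm⟩ := mem_Icc.mp (k0f_mem_Icc hm hJ fun J hJ => (hs J hJ).2)
  have hzsm : zs ≤ m := le_m_of_mem_P hkm hzs
  have hIcc : ∀ z ∈ TIcc m g r zs, z ∈ Icc 1 m :=
    fun z => mem_Icc_of_mem_TIcc (mem_Icc.mpr ⟨hk1.trans (le_of_mem_P hzs), hzsm⟩)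
  have hgpos : ∀ z ∈ TIcc m g r zs, 0 < g z := fun z hz => pos_of_increasing hg1 hg (hIcc z hz)
  have hrpos : ∀ z ∈ TIcc m g r zs, 0 < r z := fun z hz => pos_of_increasing hr1 hr (hIcc z hz)
  have hcover := sum_SH_le_sum_cn_mul (fun J hJ => (hs J hJ).1.le) hzsm hgpos
  rw [← sub_nonneg, ← sum_sub_distrib]
  calc (0 : ℝ)
      ≤ ∑ z ∈ TIcc m g r zs with z0 ≤ z,
          (cn m g r s 𝒥 zs z * g z - SH m g r s 𝒥 z) * (r z / g z) := by
        refine sum_mul_nonneg_of_suffix_sum_nonneg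
          ((ratio_monotoneOn_T hzsm).mono fun z hz => mem_T_of_mem_TIcc (mem_filter.mp hz).1)
          (fun z hz => (div_pos (hrpos z (mem_filter.mp hz).1) (hgpos z (mem_filter.mp hz).1)).le)
          fun t ht => ?_
        rw [filter_filter, filter_congr fun z _ => and_iff_right_of_imp
          fun htz => (mem_filter.mp ht).2.trans htz, sum_sub_distrib, sub_nonneg]
        exact hcover t (le_of_mem_T hzsm (mem_T_of_mem_TIcc (mem_filter.mp ht).1))
    _ = _ := sum_congr rfl fun z hz => by field_simp [(hgpos z (mem_filter.mp hz).1).ne']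

end BSHM
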